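/- Let γ be a path in [n]×[k] with k ≥ 1, write γ(i) = (a_i, b_i), and let r be the largest index with b_r = 0 (so γ(i) = (i,0) for all i ≤ r). Define γ̃ : [n+k−1] → [n]×[k−1] by γ̃(t) = (t, 0) for t ≤ r and γ̃(t) = (a_{t+1}, b_{t+1} − 1) for t > r. Then γ̃ is a path in [n]×[k−1], and for all (i,j) ∈ [n+k]×[k−1] one has E_γ(i, j+1) = (id × d_0)(E_{γ̃}(s_r(i), j)), where s_r : [n+k] → [n+k−1] is the degeneracy identifying r and r+1 and d_0 : [k−1] → [k] is the map y ↦ y+1. -/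

import Mathlib

/-- `γ` is a path in `[n] × [k]` (a simplex of maximal dimension of `Δⁿ × Δᵏ`):
it starts at `(0,0)`, ends at `(n,k)`, and each step increases exactly one
coordinate by exactly `1`.  The parameter `m` records the length of the path;
necessarily `m = n + k`. -/
def IsPath (n k m : ℕ) (γ : Fin (m + 1) → Fin (n + 1) × Fin (k + 1)) : Prop :=
  γ 0 = (0, 0) ∧
  γ (Fin.last m) = (Fin.last n, Fin.last k) ∧
  ∀ i : Fin m,
    (((γ i.succ).1 : ℕ) = ((γ i.castSucc).1 : ℕ) + 1 ∧ (γ i.succ).2 = (γ i.castSucc).2) ∨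
    ((γ i.succ).1 = (γ i.castSucc).1 ∧ ((γ i.succ).2 : ℕ) = ((γ i.castSucc).2 : ℕ) + 1)

/-- The extension `E_γ : [n+k] × [k] → [n] × [k]` of a path `γ`, given by
`E_γ(i, j) = (a_i, max (b_i) j)` where `γ i = (a_i, b_i)`. -/
def pathExt (n k m : ℕ) (γ : Fin (m + 1) → Fin (n + 1) × Fin (k + 1)) :
    Fin (m + 1) × Fin (k + 1) → Fin (n + 1) × Fin (k + 1) :=
  fun p => ((γ p.1).1, max (γ p.1).2 p.2)

/-- The strict order on paths: `γ₁ < γ₂` if at the least index `s` where they differ the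
first coordinate of `γ₁ s` is smaller than that of `γ₂ s`. -/
def pathLT (n k m : ℕ) (γ₁ γ₂ : Fin (m + 1) → Fin (n + 1) × Fin (k + 1)) : Prop :=
  ∃ s : Fin (m + 1), γ₁ s ≠ γ₂ s ∧ (∀ t : Fin (m + 1), t < s → γ₁ t = γ₂ t) ∧
    (γ₁ s).1 < (γ₂ s).1

/-!
Write `s₀ : [k+1] → [k]` for the degeneracy identifying `0` and `1`. Then
`γ̃ = (id × s₀) ∘ γ ∘ δ_{r+1}`: delete the point `γ(r+1) = (r, 1)` and lower the rest by one row.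
Since the step from `γ(r) = (r, 0)` to `γ(r+1)` is vertical, `id × s₀` identifies these two points,
so `γ̃ ∘ s_r = (id × s₀) ∘ γ`. Every other step of `γ` either stays in row `0` or lies above it,
and `id × s₀` preserves it; and the extension identity reduces to `max b (j+1) = max (s₀ b) j + 1`.
-/

open Fin

section Steps

variable {n k : ℕ}

theorem val_predAbove_zero (b : Fin (k + 2)) : (predAbove 0 b : ℕ) = b - 1 := by
  cases b using Fin.cases with
  | zero => simp
  | succ c => simp

theorem max_succ_eq_succ_max_predAbove_zero (b : Fin (k + 2)) (j : Fin (k + 1)) :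
    max b j.succ = (max (predAbove 0 b) j).succ := by
  cases b using Fin.cases with
  | zero => simp
  | succ c => simp [(strictMono_succ (n := k + 1)).monotone.map_max]

def shiftDown (p : Fin (n + 1) × Fin (k + 2)) : Fin (n + 1) × Fin (k + 1) :=
  (p.1, predAbove 0 p.2)

def IsPathStep (p q : Fin (n + 1) × Fin (k + 1)) : Prop :=
  ((q.1 : ℕ) = (p.1 : ℕ) + 1 ∧ q.2 = p.2) ∨ (q.1 = p.1 ∧ (q.2 : ℕ) = (p.2 : ℕ) + 1)

namespace IsPathStep

theorem snd_le {p q : Fin (n + 1) × Fin (k + 1)} (h : IsPathStep p q) : p.2 ≤ q.2 := by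
  rcases h with ⟨-, h⟩ | ⟨-, h⟩
  · exact h.ge
  · exact Fin.le_def.2 (by omega)

theorem val_fst_add_snd {p q : Fin (n + 1) × Fin (k + 1)} (h : IsPathStep p q) :
    (q.1 : ℕ) + q.2 = (p.1 : ℕ) + p.2 + 1 := by
  rcases h with ⟨h₁, h₂⟩ | ⟨h₁, h₂⟩
  · rw [h₁, h₂]; omega
  · rw [h₁, h₂]; omega

theorem map_shiftDown {p q : Fin (n + 1) × Fin (k + 2)} (h : IsPathStep p q)
    (hpq : q.2 = 0 ∨ p.2 ≠ 0) : IsPathStep (shiftDown p) (shiftDown q) := by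
  have hp := val_predAbove_zero p.2
  have hq := val_predAbove_zero q.2
  simp only [IsPathStep, shiftDown, ne_eq, Fin.ext_iff, Fin.val_zero] at h hpq ⊢
  rw [hp, hq]
  omega

theorem shiftDown_eq_shiftDown {p q : Fin (n + 1) × Fin (k + 2)} (h : IsPathStep p q)
    (hp : p.2 = 0) (hq : q.2 ≠ 0) : shiftDown p = shiftDown q := by
  rcases h with ⟨-, h⟩ | ⟨h₁, h₂⟩
  · exact absurd (h.trans hp) hq
  · have hq1 : q.2 = 1 := Fin.ext (by simp [h₂, hp])
    simp [shiftDown, h₁, hp, hq1]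

end IsPathStep

end Steps

namespace IsPath

variable {n k m : ℕ} {γ : Fin (m + 1) → Fin (n + 1) × Fin (k + 1)}

theorem step (hγ : IsPath n k m γ) (i : Fin m) : IsPathStep (γ i.castSucc) (γ i.succ) :=
  hγ.2.2 i

theorem monotone_snd (hγ : IsPath n k m γ) : Monotone fun i => (γ i).2 :=
  Fin.monotone_iff_le_succ.2 fun i => (hγ.step i).snd_le

theorem val_fst_add_snd (hγ : IsPath n k m γ) (i : Fin (m + 1)) :
    ((γ i).1 : ℕ) + (γ i).2 = i := by
  induction i using Fin.induction with
  | zero => simp [hγ.1]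
  | succ i ih => rw [(hγ.step i).val_fst_add_snd, ih]; simp

theorem val_fst_of_snd_eq_zero (hγ : IsPath n k m γ) {i : Fin (m + 1)} (hi : (γ i).2 = 0) :
    ((γ i).1 : ℕ) = i := by
  simpa [hi] using hγ.val_fst_add_snd i

theorem snd_eq_zero_of_le (hγ : IsPath n k m γ) {s t : Fin (m + 1)} (hs : (γ s).2 = 0)
    (hts : t ≤ s) : (γ t).2 = 0 :=
  le_antisymm (hs ▸ hγ.monotone_snd hts) (Fin.zero_le _)

end IsPath

section Strip

variable {n k m : ℕ} {γ : Fin (m + 2) → Fin (n + 1) × Fin (k + 2)} {r : Fin (m + 1)}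

def stripFirstRow (r : Fin (m + 1)) (γ : Fin (m + 2) → Fin (n + 1) × Fin (k + 2)) :
    Fin (m + 1) → Fin (n + 1) × Fin (k + 1) :=
  fun t => shiftDown (γ (r.succ.succAbove t))

theorem stripFirstRow_predAbove (h : shiftDown (γ r.castSucc) = shiftDown (γ r.succ))
    (i : Fin (m + 2)) : stripFirstRow r γ (r.predAbove i) = shiftDown (γ i) := by
  by_cases hi : i = r.succ
  · subst hi
    rw [stripFirstRow, predAbove_succ_self, succAbove_of_castSucc_lt _ _ castSucc_lt_succ, h]
  · rw [stripFirstRow, succ_succAbove_predAbove hi]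

theorem predAbove_castSucc_succAbove (r : Fin (m + 1)) (i : Fin m) :
    r.predAbove (r.succAbove i).castSucc = i.castSucc := by
  rcases lt_or_ge i.castSucc r with h | h
  · rw [succAbove_of_castSucc_lt _ _ h, predAbove_castSucc_of_le _ _ h.le]
  · rw [succAbove_of_le_castSucc _ _ h, ← succ_castSucc, predAbove_succ_of_le _ _ h]

theorem predAbove_succ_succAbove (r : Fin (m + 1)) (i : Fin m) :
    r.predAbove (r.succAbove i).succ = i.succ := by
  rcases lt_or_ge i.castSucc r with h | h
  · rw [succAbove_of_castSucc_lt _ _ h, succ_castSucc,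
      predAbove_castSucc_of_le _ _ (castSucc_lt_iff_succ_le.1 h)]
  · rw [succAbove_of_le_castSucc _ _ h, predAbove_succ_of_le _ _ (h.trans (castSucc_le_succ i))]

theorem stripFirstRow_of_le {t : Fin (m + 1)} (ht : t ≤ r) :
    stripFirstRow r γ t = shiftDown (γ t.castSucc) := by
  rw [stripFirstRow, succAbove_of_castSucc_lt _ _ (castSucc_lt_succ_iff.2 ht)]

theorem stripFirstRow_of_lt {t : Fin (m + 1)} (ht : r < t) :
    stripFirstRow r γ t = shiftDown (γ t.succ) := by
  rw [stripFirstRow, succAbove_of_le_castSucc _ _ (succ_le_castSucc_iff.2 ht)]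

theorem pathExt_stripFirstRow (h : shiftDown (γ r.castSucc) = shiftDown (γ r.succ))
    (i : Fin (m + 2)) (j : Fin (k + 1)) :
    pathExt n (k + 1) (m + 1) γ (i, j.succ) =
      ((pathExt n k m (stripFirstRow r γ) (r.predAbove i, j)).1,
        (pathExt n k m (stripFirstRow r γ) (r.predAbove i, j)).2.succ) := by
  simp only [pathExt, stripFirstRow_predAbove h, shiftDown, max_succ_eq_succ_max_predAbove_zero]

variable (hγ : IsPath n (k + 1) (m + 1) γ) (hr0 : (γ r.castSucc).2 = 0)
  (hr : ∀ t, (γ t).2 = 0 → t ≤ r.castSucc)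
include hγ hr0 hr

theorem shiftDown_castSucc_eq_shiftDown_succ :
    shiftDown (γ r.castSucc) = shiftDown (γ r.succ) :=
  (hγ.step r).shiftDown_eq_shiftDown hr0 fun h => (hr _ h).not_gt castSucc_lt_succ

theorem isPath_stripFirstRow : IsPath n k m (stripFirstRow r γ) := by
  have hcollapse := shiftDown_castSucc_eq_shiftDown_succ hγ hr0 hr
  refine ⟨?_, ?_, fun i => ?_⟩
  · rw [← predAbove_right_zero (i := r), stripFirstRow_predAbove hcollapse, hγ.1]
    simp [shiftDown]
  · rw [← predAbove_right_last (i := r), stripFirstRow_predAbove hcollapse, hγ.2.1]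
    simp [shiftDown]
  · show IsPathStep _ _
    rw [← predAbove_castSucc_succAbove r i, ← predAbove_succ_succAbove r i,
      stripFirstRow_predAbove hcollapse, stripFirstRow_predAbove hcollapse]
    refine (hγ.step _).map_shiftDown ?_
    rcases lt_or_gt_of_ne (succAbove_ne r i) with h | h
    · exact Or.inl (hγ.snd_eq_zero_of_le hr0 (succ_le_castSucc_iff.2 h))
    · exact Or.inr fun h0 => (hr _ h0).not_gt (castSucc_lt_castSucc_iff.2 h)

end Strip

/-- Let `γ` be a path in `[n] × [k+1]`, write `γ i = (a_i, b_i)`, and let `r` be the largest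
index with `b_r = 0`.  Define `γ̃ : [n+k] → [n] × [k]` by `γ̃ t = (t, 0)` for `t ≤ r` and
`γ̃ t = (a_{t+1}, b_{t+1} - 1)` for `t > r`.  Then `γ̃` is a path in `[n] × [k]`, and for all
`(i, j)` one has `E_γ (i, j+1) = (id × d₀) (E_{γ̃} (s_r i, j))`. -/
theorem pathExt_strip_first_row (n k : ℕ)
    (γ : Fin (n + k + 2) → Fin (n + 1) × Fin (k + 2))
    (hγ : IsPath n (k + 1) (n + k + 1) γ)
    (r : Fin (n + k + 1))
    (hr0 : (γ r.castSucc).2 = 0)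
    (hrmax : ∀ t : Fin (n + k + 2), (γ t).2 = 0 → (t : ℕ) ≤ (r : ℕ)) :
    ∃ γt : Fin (n + k + 1) → Fin (n + 1) × Fin (k + 1),
      (∀ t : Fin (n + k + 1), (t : ℕ) ≤ (r : ℕ) →
        ((γt t).1 : ℕ) = (t : ℕ) ∧ (γt t).2 = 0) ∧
      (∀ t : Fin (n + k + 1), (r : ℕ) < (t : ℕ) →
        (γt t).1 = (γ t.succ).1 ∧ ((γt t).2 : ℕ) = ((γ t.succ).2 : ℕ) - 1) ∧
      IsPath n k (n + k) γt ∧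
      (∀ (i : Fin (n + k + 2)) (j : Fin (k + 1)),
        pathExt n (k + 1) (n + k + 1) γ (i, j.succ) =
          ((pathExt n k (n + k) γt (r.predAbove i, j)).1,
            (pathExt n k (n + k) γt (r.predAbove i, j)).2.succ)) := by
  refine ⟨stripFirstRow r γ, fun t ht => ?_, fun t ht => ?_, isPath_stripFirstRow hγ hr0 hrmax,
    pathExt_stripFirstRow (shiftDown_castSucc_eq_shiftDown_succ hγ hr0 hrmax)⟩
  · have hb := hγ.snd_eq_zero_of_le hr0 (castSucc_le_castSucc_iff.2 ht)
    rw [stripFirstRow_of_le ht]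
    exact ⟨hγ.val_fst_of_snd_eq_zero hb, by simp [shiftDown, hb]⟩
  · rw [stripFirstRow_of_lt ht]
    exact ⟨rfl, val_predAbove_zero _⟩
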